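/- arXiv:gr-qc/9801023 — 3 statements merged into one kernel-verified Lean document; each statement's English description precedes it below -/
import Mathlib

section
/- On a 4-dimensional pseudo-Riemannian manifold, Yang's equations ∇_{[a}R_{b]c} = 0 hold if and only if the Weyl tensor is divergence-free (∇_a C^a_{bcd} = 0) and the scalar curvature R is constant. -/
/-- On a pseudo-Riemannian 4-manifold, Yang's equations `∇_{[a}R_{b]c} = 0` hold iff
the Weyl tensor is divergence-free and the scalar curvature is constant.  Pointwise
formulation: `DRic a b c = ∇_a R_{bc}`, `divC b c d = ∇_a C^a_{bcd}`, `dR b = ∂_b R`,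
`g`/`ginv` the metric and its inverse.  The second Bianchi identity in dimension 4
(`∇_a C^a_{bcd} = ∇_{[c}R_{d]b} − (1/6) g_{b[d}∇_{c]}R`) and the contracted Bianchi
identity are supplied as hypotheses. -/
theorem yang_iff_divergence_free_weyl_and_constant_scalar
    (g ginv : Fin 4 → Fin 4 → ℝ)
    (DRic : Fin 4 → Fin 4 → Fin 4 → ℝ)
    (divC : Fin 4 → Fin 4 → Fin 4 → ℝ)
    (dR : Fin 4 → ℝ)
    (hRicSym : ∀ a b c, DRic a b c = DRic a c b)
    (hdR : ∀ b, dR b = ∑ a, ∑ c, ginv a c * DRic b a c)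
    (hContrBianchi : ∀ b, (∑ a, ∑ c, ginv a c * DRic a c b) = (1/2) * dR b)
    (hBianchi : ∀ b c d, divC b c d =
        (1/2) * (DRic c d b - DRic d c b)
          - (1/12) * (g b d * dR c - g b c * dR d)) :
    (∀ a b c, DRic a b c - DRic b a c = 0) ↔
      ((∀ b c d, divC b c d = 0) ∧ (∀ b, dR b = 0)) := by
  constructor
  · intro h
    have hy : ∀ a b c, DRic a b c = DRic b a c := fun a b c => by linarith [h a b c]
    have hdR0 : ∀ b, dR b = 0 := by
      intro b
      have h1 : (∑ a, ∑ c, ginv a c * DRic a c b) = ∑ a, ∑ c, ginv a c * DRic b a c := by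
        refine Finset.sum_congr rfl fun a _ => Finset.sum_congr rfl fun c _ => ?_
        rw [hRicSym a c b, hy a b c]
      have h2 := hContrBianchi b
      rw [h1, ← hdR b] at h2
      linarith
    refine ⟨fun b c d => ?_, hdR0⟩
    rw [hBianchi, hy c d b, hdR0 c, hdR0 d]; ring
  · rintro ⟨hC, hR⟩ a b c
    have h2 := hBianchi c a b
    rw [hC, hR a, hR b] at h2
    linarith
end

section
/- The tensor T_{abcd} := C_{ae[bc}P^e_{d]} built from the Weyl tensor C and the trace-free Ricci tensor P_{ab} = R_{ab} − (R/4)g_{ab} is completely trace-free in all pairs of indices and satisfies the identity T_{[abc]d} = (1/3) T_{dabc}. -/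
private lemma sum_rot3 (f : Fin 4 → Fin 4 → Fin 4 → ℝ) :
    (∑ a, ∑ b, ∑ e, f a b e) = ∑ e, ∑ a, ∑ b, f a b e :=
  calc (∑ a, ∑ b, ∑ e, f a b e) = ∑ a, ∑ e, ∑ b, f a b e :=
        Finset.sum_congr rfl (fun _ _ => Finset.sum_comm)
    _ = ∑ e, ∑ a, ∑ b, f a b e := Finset.sum_comm

private lemma contract_zero (A S : Fin 4 → Fin 4 → ℝ)
    (hA : ∀ a b, A a b = - A b a) (hS : ∀ a b, S a b = S b a) :
    (∑ a, ∑ b, A a b * S a b) = 0 := by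
  have h : (∑ a, ∑ b, A a b * S a b) = -(∑ a, ∑ b, A a b * S a b) := by
    conv_lhs => rw [Finset.sum_comm]
    rw [← Finset.sum_neg_distrib]
    refine Finset.sum_congr rfl (fun b _ => ?_)
    rw [← Finset.sum_neg_distrib]
    refine Finset.sum_congr rfl (fun a _ => ?_)
    rw [hA a b, hS a b]; ring
  linarith

private lemma contract_zero' (A S : Fin 4 → Fin 4 → ℝ)
    (hA : ∀ a b, A a b = - A b a) (hS : ∀ a b, S a b = S b a) :
    (∑ a, ∑ b, S a b * A a b) = 0 := by
  have h : (∑ a, ∑ b, S a b * A a b) = ∑ a, ∑ b, A a b * S a b :=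
    Finset.sum_congr rfl fun a _ => Finset.sum_congr rfl fun b _ => by ring
  rw [h]; exact contract_zero A S hA hS

private lemma pull_mul (k : ℝ) (f h : Fin 4 → ℝ) :
    (∑ e, (k * f e) * h e) = k * ∑ e, f e * h e := by
  rw [Finset.mul_sum]
  exact Finset.sum_congr rfl fun e _ => by ring

private lemma expand_generic (W : Fin 4 → Fin 4 → ℝ) (t : Fin 4 → Fin 4 → ℝ)
    (f1 f2 f3 g1 g2 g3 : Fin 4 → Fin 4 → Fin 4 → ℝ)
    (ht : ∀ x y, t x y = (1/3) * ((∑ e, f1 x y e * g1 x y e)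
        + (∑ e, f2 x y e * g2 x y e) + (∑ e, f3 x y e * g3 x y e))) :
    (∑ x, ∑ y, W x y * t x y)
      = (1/3) * ((∑ x, ∑ y, ∑ e, (W x y * f1 x y e) * g1 x y e)
               + (∑ x, ∑ y, ∑ e, (W x y * f2 x y e) * g2 x y e)
               + (∑ x, ∑ y, ∑ e, (W x y * f3 x y e) * g3 x y e)) := by
  calc (∑ x, ∑ y, W x y * t x y)
      = ∑ x, ∑ y, (1/3) * ((∑ e, (W x y * f1 x y e) * g1 x y e)
          + (∑ e, (W x y * f2 x y e) * g2 x y e)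
          + (∑ e, (W x y * f3 x y e) * g3 x y e)) := by
        refine Finset.sum_congr rfl fun x _ => Finset.sum_congr rfl fun y _ => ?_
        rw [ht x y, pull_mul (W x y) (f1 x y) (g1 x y),
            pull_mul (W x y) (f2 x y) (g2 x y),
            pull_mul (W x y) (f3 x y) (g3 x y)]
        ring
    _ = (1/3) * ((∑ x, ∑ y, ∑ e, (W x y * f1 x y e) * g1 x y e)
               + (∑ x, ∑ y, ∑ e, (W x y * f2 x y e) * g2 x y e)
               + (∑ x, ∑ y, ∑ e, (W x y * f3 x y e) * g3 x y e)) := by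
        simp only [← Finset.mul_sum, Finset.sum_add_distrib]

private lemma z_inner (F : Fin 4 → Fin 4 → Fin 4 → ℝ) (G : Fin 4 → ℝ)
    (h : ∀ e, (∑ x, ∑ y, F x y e) = 0) :
    (∑ x, ∑ y, ∑ e, F x y e * G e) = 0 := by
  have hs : ∀ e, (∑ x, ∑ y, F x y e * G e) = (∑ x, ∑ y, F x y e) * G e := by
    intro e
    rw [Finset.sum_mul]
    exact Finset.sum_congr rfl fun x _ => (Finset.sum_mul _ _ _).symm
  rw [sum_rot3 (fun x y e => F x y e * G e)]
  refine Finset.sum_eq_zero fun e _ => ?_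
  rw [hs e, h e, zero_mul]

private lemma z_pair (W A B : Fin 4 → Fin 4 → ℝ)
    (hA : ∀ x e, A x e = - A e x)
    (hS : ∀ x e, (∑ y, W x y * B e y) = ∑ y, W e y * B x y) :
    (∑ x, ∑ y, ∑ e, (W x y * A x e) * B e y) = 0 := by
  have step : ∀ x, (∑ y, ∑ e, (W x y * A x e) * B e y)
      = ∑ e, A x e * (∑ y, W x y * B e y) := by
    intro x
    rw [Finset.sum_comm]
    refine Finset.sum_congr rfl fun e _ => ?_
    rw [Finset.mul_sum]
    exact Finset.sum_congr rfl fun y _ => by ring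
  calc (∑ x, ∑ y, ∑ e, (W x y * A x e) * B e y)
      = ∑ x, ∑ e, A x e * (∑ y, W x y * B e y) :=
        Finset.sum_congr rfl fun x _ => step x
    _ = 0 := contract_zero _ _ hA hS

private lemma z_cancel (F G : Fin 4 → Fin 4 → Fin 4 → ℝ)
    (h : ∀ x y e, G x y e = - F y x e) :
    ((∑ x, ∑ y, ∑ e, F x y e) + (∑ x, ∑ y, ∑ e, G x y e)) = 0 := by
  have hg : (∑ x, ∑ y, ∑ e, G x y e) = -(∑ x, ∑ y, ∑ e, F x y e) := by
    calc (∑ x, ∑ y, ∑ e, G x y e) = ∑ x, ∑ y, ∑ e, G y x e := Finset.sum_comm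
      _ = ∑ x, ∑ y, ∑ e, -(F x y e) := by
          refine Finset.sum_congr rfl fun x _ => Finset.sum_congr rfl fun y _ =>
            Finset.sum_congr rfl fun e _ => ?_
          exact h y x e
      _ = -(∑ x, ∑ y, ∑ e, F x y e) := by
          simp only [Finset.sum_neg_distrib]
  linarith

/-- The tensor `T_{abcd} = C_{ae[bc}P^e_{d]}` built from a Weyl-symmetric tensor `C`
and a symmetric trace-free tensor `P` (on a 4-dimensional space with nondegenerate
symmetric bilinear form `g`, inverse `ginv`) is completely trace-free in all pairs of
indices and satisfies `T_{[abc]d} = (1/3) T_{dabc}`.  Here `Pm e d = P^e{}_d` and the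
square brackets denote antisymmetrisation. -/
theorem coc_tensor_tracefree_and_cyclic
    (g ginv : Fin 4 → Fin 4 → ℝ)
    (hgsym : ∀ a b, g a b = g b a)
    (hginvsym : ∀ a b, ginv a b = ginv b a)
    (hginv : ∀ a b, (∑ e, g a e * ginv e b) = if a = b then (1:ℝ) else 0)
    (C : Fin 4 → Fin 4 → Fin 4 → Fin 4 → ℝ)
    (hCa1 : ∀ a b c d, C a b c d = - C b a c d)
    (hCa2 : ∀ a b c d, C a b c d = - C a b d c)
    (hCpair : ∀ a b c d, C a b c d = C c d a b)
    (hCbianchi : ∀ a b c d, C a b c d + C a c d b + C a d b c = 0)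
    (hCtracefree : ∀ b d, (∑ a, ∑ c, ginv a c * C a b c d) = 0)
    (P : Fin 4 → Fin 4 → ℝ)
    (hPsym : ∀ a b, P a b = P b a)
    (hPtracefree : (∑ a, ∑ b, ginv a b * P a b) = 0)
    (Pm : Fin 4 → Fin 4 → ℝ)
    (hPm : ∀ e d, Pm e d = ∑ f, ginv e f * P f d)
    (T : Fin 4 → Fin 4 → Fin 4 → Fin 4 → ℝ)
    (hT : ∀ a b c d, T a b c d =
        (1/3) * ((∑ e, C a e b c * Pm e d)
               + (∑ e, C a e c d * Pm e b)
               + (∑ e, C a e d b * Pm e c))) :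
    (∀ c d, (∑ a, ∑ b, ginv a b * T a b c d) = 0) ∧
    (∀ b d, (∑ a, ∑ c, ginv a c * T a b c d) = 0) ∧
    (∀ b c, (∑ a, ∑ d, ginv a d * T a b c d) = 0) ∧
    (∀ a d, (∑ b, ∑ c, ginv b c * T a b c d) = 0) ∧
    (∀ a c, (∑ b, ∑ d, ginv b d * T a b c d) = 0) ∧
    (∀ a b, (∑ c, ∑ d, ginv c d * T a b c d) = 0) ∧
    (∀ a b c d, (1/6) * (T a b c d + T b c a d + T c a b d
        - T b a c d - T a c b d - T c b a d) = (1/3) * T d a b c) := by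
  -- trace of C over slots 1 and 4 vanishes
  have hC14 : ∀ e d, (∑ a, ∑ b, ginv a b * C a e d b) = 0 := by
    intro e d
    have h2 : ∀ a b : Fin 4, ginv a b * C a e d b = -(ginv a b * C a e b d) :=
      fun a b => by rw [hCa2 a e d b]; ring
    calc (∑ a, ∑ b, ginv a b * C a e d b)
        = ∑ a, ∑ b, -(ginv a b * C a e b d) :=
          Finset.sum_congr rfl fun a _ => Finset.sum_congr rfl fun b _ => h2 a b
      _ = -(∑ a, ∑ b, ginv a b * C a e b d) := by
          simp only [Finset.sum_neg_distrib]
      _ = 0 := by rw [hCtracefree e d]; ring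
  -- symmetry of the raised P-tensor contraction
  have hSsym : ∀ x e, (∑ y, ginv x y * Pm e y) = ∑ y, ginv e y * Pm x y := by
    intro x e
    simp only [hPm]
    calc (∑ y, ginv x y * ∑ f, ginv e f * P f y)
        = ∑ y, ∑ f, ginv x y * (ginv e f * P f y) :=
          Finset.sum_congr rfl fun y _ => Finset.mul_sum _ _ _
      _ = ∑ f, ∑ y, ginv x y * (ginv e f * P f y) := Finset.sum_comm
      _ = ∑ y, ∑ f, ginv e y * (ginv x f * P f y) := by
          refine Finset.sum_congr rfl fun u _ => Finset.sum_congr rfl fun v _ => ?_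
          rw [hPsym v u]; ring
      _ = ∑ y, ginv e y * ∑ f, ginv x f * P f y :=
          Finset.sum_congr rfl fun y _ => (Finset.mul_sum _ _ _).symm
  refine ⟨?_, ?_, ?_, ?_, ?_, ?_, ?_⟩
  · -- trace (a,b)
    intro c d
    have E : (∑ a, ∑ b, ginv a b * T a b c d)
        = (1/3) * ((∑ x, ∑ y, ∑ e, (ginv x y * C x e y c) * Pm e d)
                 + (∑ x, ∑ y, ∑ e, (ginv x y * C x e c d) * Pm e y)
                 + (∑ x, ∑ y, ∑ e, (ginv x y * C x e d y) * Pm e c)) :=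
      expand_generic ginv _ _ _ _ _ _ _ (fun x y => hT x y c d)
    have h1 : (∑ x, ∑ y, ∑ e, (ginv x y * C x e y c) * Pm e d) = 0 :=
      z_inner _ _ (fun e => hCtracefree e c)
    have h2 : (∑ x, ∑ y, ∑ e, (ginv x y * C x e c d) * Pm e y) = 0 :=
      z_pair ginv _ Pm (fun x e => hCa1 x e c d) hSsym
    have h3 : (∑ x, ∑ y, ∑ e, (ginv x y * C x e d y) * Pm e c) = 0 :=
      z_inner _ _ (fun e => hC14 e d)
    rw [E, h1, h2, h3]; ring
  · -- trace (a,c)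
    intro b d
    have E : (∑ a, ∑ c, ginv a c * T a b c d)
        = (1/3) * ((∑ x, ∑ y, ∑ e, (ginv x y * C x e b y) * Pm e d)
                 + (∑ x, ∑ y, ∑ e, (ginv x y * C x e y d) * Pm e b)
                 + (∑ x, ∑ y, ∑ e, (ginv x y * C x e d b) * Pm e y)) :=
      expand_generic ginv _ _ _ _ _ _ _ (fun x y => hT x b y d)
    have h1 : (∑ x, ∑ y, ∑ e, (ginv x y * C x e b y) * Pm e d) = 0 :=
      z_inner _ _ (fun e => hC14 e b)
    have h2 : (∑ x, ∑ y, ∑ e, (ginv x y * C x e y d) * Pm e b) = 0 :=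
      z_inner _ _ (fun e => hCtracefree e d)
    have h3 : (∑ x, ∑ y, ∑ e, (ginv x y * C x e d b) * Pm e y) = 0 :=
      z_pair ginv _ Pm (fun x e => hCa1 x e d b) hSsym
    rw [E, h1, h2, h3]; ring
  · -- trace (a,d)
    intro b c
    have E : (∑ a, ∑ d, ginv a d * T a b c d)
        = (1/3) * ((∑ x, ∑ y, ∑ e, (ginv x y * C x e b c) * Pm e y)
                 + (∑ x, ∑ y, ∑ e, (ginv x y * C x e c y) * Pm e b)
                 + (∑ x, ∑ y, ∑ e, (ginv x y * C x e y b) * Pm e c)) :=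
      expand_generic ginv _ _ _ _ _ _ _ (fun x y => hT x b c y)
    have h1 : (∑ x, ∑ y, ∑ e, (ginv x y * C x e b c) * Pm e y) = 0 :=
      z_pair ginv _ Pm (fun x e => hCa1 x e b c) hSsym
    have h2 : (∑ x, ∑ y, ∑ e, (ginv x y * C x e c y) * Pm e b) = 0 :=
      z_inner _ _ (fun e => hC14 e c)
    have h3 : (∑ x, ∑ y, ∑ e, (ginv x y * C x e y b) * Pm e c) = 0 :=
      z_inner _ _ (fun e => hCtracefree e b)
    rw [E, h1, h2, h3]; ring
  · -- trace (b,c)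
    intro a d
    have E : (∑ b, ∑ c, ginv b c * T a b c d)
        = (1/3) * ((∑ x, ∑ y, ∑ e, (ginv x y * C a e x y) * Pm e d)
                 + (∑ x, ∑ y, ∑ e, (ginv x y * C a e y d) * Pm e x)
                 + (∑ x, ∑ y, ∑ e, (ginv x y * C a e d x) * Pm e y)) :=
      expand_generic ginv _ _ _ _ _ _ _ (fun x y => hT a x y d)
    have h1 : (∑ x, ∑ y, ∑ e, (ginv x y * C a e x y) * Pm e d) = 0 :=
      z_inner _ _ (fun e => contract_zero' (fun x y => C a e x y) ginv
        (fun x y => hCa2 a e x y) hginvsym)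
    have h23 : (∑ x, ∑ y, ∑ e, (ginv x y * C a e y d) * Pm e x)
        + (∑ x, ∑ y, ∑ e, (ginv x y * C a e d x) * Pm e y) = 0 :=
      z_cancel _ _ (fun x y e => by rw [hCa2 a e d x, hginvsym x y]; ring)
    rw [E, h1]; linarith
  · -- trace (b,d)
    intro a c
    have E : (∑ b, ∑ d, ginv b d * T a b c d)
        = (1/3) * ((∑ x, ∑ y, ∑ e, (ginv x y * C a e x c) * Pm e y)
                 + (∑ x, ∑ y, ∑ e, (ginv x y * C a e c y) * Pm e x)
                 + (∑ x, ∑ y, ∑ e, (ginv x y * C a e y x) * Pm e c)) :=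
      expand_generic ginv _ _ _ _ _ _ _ (fun x y => hT a x c y)
    have h3 : (∑ x, ∑ y, ∑ e, (ginv x y * C a e y x) * Pm e c) = 0 :=
      z_inner _ _ (fun e => contract_zero' (fun x y => C a e y x) ginv
        (fun x y => hCa2 a e y x) hginvsym)
    have h12 : (∑ x, ∑ y, ∑ e, (ginv x y * C a e x c) * Pm e y)
        + (∑ x, ∑ y, ∑ e, (ginv x y * C a e c y) * Pm e x) = 0 :=
      z_cancel _ _ (fun x y e => by rw [hCa2 a e c y, hginvsym x y]; ring)
    rw [E, h3]; linarith
  · -- trace (c,d)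
    intro a b
    have E : (∑ c, ∑ d, ginv c d * T a b c d)
        = (1/3) * ((∑ x, ∑ y, ∑ e, (ginv x y * C a e b x) * Pm e y)
                 + (∑ x, ∑ y, ∑ e, (ginv x y * C a e x y) * Pm e b)
                 + (∑ x, ∑ y, ∑ e, (ginv x y * C a e y b) * Pm e x)) :=
      expand_generic ginv _ _ _ _ _ _ _ (fun x y => hT a b x y)
    have h2 : (∑ x, ∑ y, ∑ e, (ginv x y * C a e x y) * Pm e b) = 0 :=
      z_inner _ _ (fun e => contract_zero' (fun x y => C a e x y) ginv
        (fun x y => hCa2 a e x y) hginvsym)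
    have h13 : (∑ x, ∑ y, ∑ e, (ginv x y * C a e b x) * Pm e y)
        + (∑ x, ∑ y, ∑ e, (ginv x y * C a e y b) * Pm e x) = 0 :=
      z_cancel _ _ (fun x y e => by rw [hCa2 a e y b, hginvsym x y]; ring)
    rw [E, h2]; linarith
  · -- cyclic identity
    intro a b c d
    have cycgen : ∀ u v w z, C w u v z - C v u w z = C z u v w := by
      intro u v w z
      linarith [hCbianchi v w z u, hCpair w u v z, hCpair z u v w, hCa2 v z u w]
    have key : ∀ e : Fin 4,
        ((C a e b c * Pm e d + C a e c d * Pm e b + C a e d b * Pm e c)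
        + (C b e c a * Pm e d + C b e a d * Pm e c + C b e d c * Pm e a)
        + (C c e a b * Pm e d + C c e b d * Pm e a + C c e d a * Pm e b))
        - (C b e a c * Pm e d + C b e c d * Pm e a + C b e d a * Pm e c)
        - (C a e c b * Pm e d + C a e b d * Pm e c + C a e d c * Pm e b)
        - (C c e b a * Pm e d + C c e a d * Pm e b + C c e d b * Pm e a)
        = 2 * (C d e a b * Pm e c) + 2 * (C d e b c * Pm e a)
          + 2 * (C d e c a * Pm e b) := by
      intro e
      have h0 : C a e b c + C b e c a + C c e a b
          - C b e a c - C a e c b - C c e b a = 0 := by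
        linarith [hCbianchi a b c e, hCpair c e a b, hCpair b e c a,
          hCa1 c a b e, hCa2 a c b e, hCa2 a e b c, hCa2 b e c a, hCa2 c e a b]
      have hA := cycgen e b c d
      have hB := cycgen e c a d
      have hC := cycgen e a b d
      linear_combination Pm e d * h0 + 2 * Pm e a * hA + 2 * Pm e b * hB
        + 2 * Pm e c * hC
        + Pm e a * hCa2 b e d c - Pm e a * hCa2 c e d b
        + Pm e b * hCa2 c e d a - Pm e b * hCa2 a e d c
        + Pm e c * hCa2 a e d b - Pm e c * hCa2 b e d a
    have big : (∑ e, (((C a e b c * Pm e d + C a e c d * Pm e b + C a e d b * Pm e c)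
        + (C b e c a * Pm e d + C b e a d * Pm e c + C b e d c * Pm e a)
        + (C c e a b * Pm e d + C c e b d * Pm e a + C c e d a * Pm e b))
        - (C b e a c * Pm e d + C b e c d * Pm e a + C b e d a * Pm e c)
        - (C a e c b * Pm e d + C a e b d * Pm e c + C a e d c * Pm e b)
        - (C c e b a * Pm e d + C c e a d * Pm e b + C c e d b * Pm e a)))
        = ∑ e, (2 * (C d e a b * Pm e c) + 2 * (C d e b c * Pm e a)
          + 2 * (C d e c a * Pm e b)) :=
      Finset.sum_congr rfl fun e _ => key e
    simp only [Finset.sum_add_distrib, Finset.sum_sub_distrib, ← Finset.mul_sum] at big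
    rw [hT a b c d, hT b c a d, hT c a b d, hT b a c d, hT a c b d, hT c b a d,
      hT d a b c]
    linear_combination (1/18 : ℝ) * big
end

section
/- Conversely, if the velocity gradient satisfies ∇_c u_a = (θ/3) h_{ca} (geodesic, shear-free, twist-free flow) and the equation of state is p = μ/3 + c, then the perfect-fluid energy-momentum tensor satisfies ∇_{[a}T_{b]c} = 0. -/
/-- Conversely, if the velocity gradient satisfies `∇_c u_a = (θ/3) h_{ca}` (geodesic,
shear-free, twist-free flow) and the equation of state is `p = μ/3 + c`, then the
perfect-fluid energy-momentum tensor satisfies `∇_{[a}T_{b]c} = 0`.  Pointwise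
formulation; conservation gives `∇_a μ = θ(μ+p)u_a`, and the equation of state gives
`∇_a p = (1/3)∇_a μ`; `DT` is the Leibniz expansion of `∇_a T_{bc}`. -/
theorem geodesic_shearfree_fluid_satisfies_yang
    (g : Fin 4 → Fin 4 → ℝ)
    (μ p c0 θ : ℝ) (u Dμ Dp : Fin 4 → ℝ)
    (Du : Fin 4 → Fin 4 → ℝ)
    (heos : p = μ / 3 + c0)
    (hDu : ∀ c a, Du c a = (θ / 3) * (g c a + u c * u a))
    (hgsym : ∀ a b, g a b = g b a)
    (hDμ : ∀ a, Dμ a = θ * (μ + p) * u a)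
    (hDp : ∀ a, Dp a = (1/3) * Dμ a)
    (DT : Fin 4 → Fin 4 → Fin 4 → ℝ)
    (hDT : ∀ a b c, DT a b c = (Dμ a + Dp a) * u b * u c
        + (μ + p) * (Du a b * u c + u b * Du a c) + Dp a * g b c) :
    ∀ a b c, DT a b c - DT b a c = 0 := by
  intro a b c
  simp only [hDT, hDu, hDμ, hDp, hgsym b a]
  ring
end
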